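/- Let k and ℓ be integers with 2 ≤ k ≤ ℓ and let F_{k,ℓ} be the graph described in the context. Then for every choice of vertices x_i ∈ {t_{i,1}, t_{i,2}} for i = 1,…,k−1, the set {u, x_1,…,x_{k−1}} is a total dominating set of F_{k,ℓ} of cardinality k. -/

import Mathlib

/-- Vertices of `F_{k,ℓ}`: triangle vertices `t_{i,j}` as `Sum.inl (i,j)`
(0-indexed, `i : Fin (k+ℓ-2)`, `j : Fin 3`), and `u = Sum.inr false`,
`v = Sum.inr true`. -/
abbrev FklV (k l : ℕ) := (Fin (k + l - 2) × Fin 3) ⊕ Bool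

/-- Edge relation of `F_{k,ℓ}`: triangles on each `t_{i,·}`; `u` adjacent to
`t_{i,1}`, `t_{i,2}` (0-indexed `j ∈ {0,1}`) for all `i` and to `t_{i,3}` for
`i ≥ k` (0-indexed `k-1 ≤ i.val`); `v` adjacent to `t_{i,1}`, `t_{i,2}` for
all `i` and to `t_{i,3}` for `i ≤ k-1` (0-indexed `i.val < k-1`); `u` and `v`
nonadjacent. -/
def FklRel (k l : ℕ) : FklV k l → FklV k l → Prop
  | .inl p, .inl q => p.1 = q.1
  | .inr false, .inl p =>
      p.2.val = 0 ∨ p.2.val = 1 ∨ (k - 1 ≤ p.1.val ∧ p.2.val = 2)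
  | .inr true, .inl p =>
      p.2.val = 0 ∨ p.2.val = 1 ∨ (p.1.val < k - 1 ∧ p.2.val = 2)
  | _, _ => False

/-- The graph `F_{k,ℓ}`. -/
def Fkl (k l : ℕ) : SimpleGraph (FklV k l) := SimpleGraph.fromRel (FklRel k l)

/-- `D` is a total dominating set of `G`. -/
def IsTotalDomSet {V : Type*} (G : SimpleGraph V) (D : Finset V) : Prop :=
  ∀ v : V, ∃ d ∈ D, G.Adj v d

namespace Fkl

variable {k l : ℕ}

lemma adj_inl_inl {p q : Fin (k + l - 2) × Fin 3} (hi : p.1 = q.1) (hne : p ≠ q) :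
    (Fkl k l).Adj (.inl p) (.inl q) :=
  ⟨by simpa using hne, Or.inl hi⟩

lemma adj_inl_inr {p : Fin (k + l - 2) × Fin 3} (b : Bool) (hj : p.2.val = 0 ∨ p.2.val = 1) :
    (Fkl k l).Adj (.inl p) (.inr b) := by
  cases b <;> exact ⟨Sum.inl_ne_inr, Or.inr (show _ ∨ _ ∨ _ by omega)⟩

lemma adj_inl_inr_false_of_le {p : Fin (k + l - 2) × Fin 3} (hi : k - 1 ≤ p.1.val) :
    (Fkl k l).Adj (.inl p) (.inr false) :=
  ⟨Sum.inl_ne_inr, Or.inr (show _ ∨ _ ∨ _ by omega)⟩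

theorem isTotalDomSet_of_mem (hk : 2 ≤ k) (hl : 1 ≤ l) {c : Fin (k + l - 2) → Fin 3}
    (hc : ∀ i, i.val < k - 1 → (c i).val = 0 ∨ (c i).val = 1) {D : Finset (FklV k l)}
    (hu : .inr false ∈ D) (hx : ∀ i, i.val < k - 1 → .inl (i, c i) ∈ D) :
    IsTotalDomSet (Fkl k l) D := by
  have hi₀ : (0 : ℕ) < k - 1 := by omega
  let i₀ : Fin (k + l - 2) := ⟨0, by omega⟩
  rintro (⟨i, j⟩ | b)
  · by_cases hi : i.val < k - 1
    · by_cases hj : j = c i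
      · subst hj
        exact ⟨_, hu, adj_inl_inr false (hc i hi)⟩
      · exact ⟨_, hx i hi, adj_inl_inl rfl (by simp [hj])⟩
    · exact ⟨_, hu, adj_inl_inr_false_of_le (by simpa using hi)⟩
  · exact ⟨_, hx i₀ hi₀, (adj_inl_inr b (hc i₀ hi₀)).symm⟩

end Fkl

/-- For every choice `x_i ∈ {t_{i,1}, t_{i,2}}` for `i = 1, …, k-1` (0-indexed
`i.val < k-1`), the set `{u, x_1, …, x_{k-1}}` is a total dominating set of
`F_{k,ℓ}` of cardinality `k`. -/
theorem stmt18 (k l : ℕ) (hk : 2 ≤ k) (hkl : k ≤ l)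
    (c : Fin (k + l - 2) → Fin 3)
    (hc : ∀ i, i.val < k - 1 → (c i).val = 0 ∨ (c i).val = 1)
    (D : Finset (FklV k l))
    (hDdef : D = insert (Sum.inr false)
      (Finset.image (fun i => Sum.inl (i, c i))
        (Finset.univ.filter (fun i : Fin (k + l - 2) => i.val < k - 1)))) :
    IsTotalDomSet (Fkl k l) D ∧ D.card = k := by
  subst hDdef
  refine ⟨Fkl.isTotalDomSet_of_mem hk (by omega) hc (Finset.mem_insert_self _ _)
    fun i hi => Finset.mem_insert_of_mem (Finset.mem_image_of_mem _ (by simpa using hi)), ?_⟩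
  have hinj : Function.Injective fun i : Fin (k + l - 2) => (Sum.inl (i, c i) : FklV k l) :=
    fun a b h => (Prod.ext_iff.mp (Sum.inl.inj h)).1
  rw [Finset.card_insert_of_notMem (by simp), Finset.card_image_of_injective _ hinj,
    Fin.card_filter_val_lt]
  omega
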